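/- Let 𝒟₁ = a(1-a)∂²/∂a² + (1-2a)∂/∂a - 1/4. For a, b in a simply connected domain with a ≠ b, the function ℒ(a,b) = 2∫_Δ dx dy/(√(x(1-x)(1-ax))√(y(1-y)(1-by))) satisfies 𝒟₁(ℒ) = (2/(a-b))·(√(1-b)/√(1-a) - 1). -/

import Mathlib

/-!
By Fubini, `ℒ(a,b) = 2 ∫₀¹ ω_a(x) G_b(x) dx`, where `ω_c = (x(1-x)(1-cx))^{-1/2}` and `G_b` is the
primitive of `ω_b` vanishing at `0`. Differentiating under the integral sign,
`𝒟₁ ℒ = 2 ∫₀¹ (𝒟₁ ω_a) G_b`, and `𝒟₁ ω_a` is the exact derivative `∂ₓ g_a` of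
`g_a = -½ √(x(1-x)) (1-ax)^{-3/2}`. As `g_a(1) = 0 = G_b(0)`, integration by parts leaves
`-2 ∫₀¹ g_a ω_b = ∫₀¹ (1-ax)^{-3/2} (1-bx)^{-1/2} dx`, and `2/(a-b) · √(1-bx)/√(1-ax)` is a
primitive of this integrand.
-/

open MeasureTheory

/-- `ℒ(a,b) = 2∫_Δ dx dy/(√(x(1-x)(1-ax))·√(y(1-y)(1-by)))` over the triangle
`Δ = {(x,y) : 0 < y < x < 1}`. -/
noncomputable def Lfun (a b : ℝ) : ℝ :=
  2 * ∫ p in {q : ℝ × ℝ | 0 < q.2 ∧ q.2 < q.1 ∧ q.1 < 1},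
    (Real.sqrt (p.1 * (1 - p.1) * (1 - a * p.1)) *
     Real.sqrt (p.2 * (1 - p.2) * (1 - b * p.2)))⁻¹

open Set

theorem setIntegral_triangle_mul {φ ψ : ℝ → ℝ} (hφ : IntegrableOn φ (Ioo 0 1))
    (hψ : IntegrableOn ψ (Ioo 0 1)) :
    ∫ p in {q : ℝ × ℝ | 0 < q.2 ∧ q.2 < q.1 ∧ q.1 < 1}, φ p.1 * ψ p.2
      = ∫ x in Ioo 0 1, φ x * ∫ y in 0..x, ψ y := by
  set T := {q : ℝ × ℝ | 0 < q.2 ∧ q.2 < q.1 ∧ q.1 < 1}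
  have hT : MeasurableSet T :=
    (measurableSet_lt measurable_const measurable_snd).inter
      ((measurableSet_lt measurable_snd measurable_fst).inter
        (measurableSet_lt measurable_fst measurable_const))
  have hT_indicator : T.indicator (fun p => φ p.1 * ψ p.2)
      = fun p => (Ioo 0 1).indicator φ p.1 * (Ioo 0 p.1).indicator ψ p.2 := by
    ext ⟨x, y⟩
    simp only [indicator_apply, T, mem_ofPred_eq, mem_Ioo]
    split_ifs <;> grind
  have hint : Integrable (T.indicator fun p => φ p.1 * ψ p.2) (volume.prod volume) := by
    refine (integrable_indicator_iff hT).2 ?_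
    have hsq : IntegrableOn (fun p : ℝ × ℝ => φ p.1 * ψ p.2) (Ioo 0 1 ×ˢ Ioo 0 1) := by
      rw [IntegrableOn, Measure.volume_eq_prod, ← Measure.prod_restrict]
      exact hφ.mul_prod hψ
    exact hsq.mono_set fun q hq => ⟨⟨hq.1.trans hq.2.1, hq.2.2⟩, hq.1, hq.2.1.trans hq.2.2⟩
  rw [← integral_indicator hT, Measure.volume_eq_prod, integral_prod _ hint, hT_indicator,
    ← integral_indicator measurableSet_Ioo]
  congr 1 with x
  by_cases hx : x ∈ Ioo (0 : ℝ) 1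
  · simp only [indicator_of_mem hx, integral_const_mul, integral_indicator measurableSet_Ioo,
      intervalIntegral.integral_of_le hx.1.le, integral_Ioc_eq_integral_Ioo]
  · simp [indicator_of_notMem hx]

noncomputable def arcsineWeight (x : ℝ) : ℝ := (√(x * (1 - x)))⁻¹

theorem hasDerivAt_arcsin_two_mul_sub_one {x : ℝ} (hx : x ∈ Ioo (0 : ℝ) 1) :
    HasDerivAt (fun y => Real.arcsin (2 * y - 1)) (arcsineWeight x) x := by
  have hlin : HasDerivAt (fun y : ℝ => 2 * y - 1) 2 x := by
    simpa using ((hasDerivAt_id x).const_mul 2).sub_const 1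
  refine ((Real.hasDerivAt_arcsin (by linarith [hx.1]) (by linarith [hx.2])).comp x hlin)
    |>.congr_deriv ?_
  have hq : 0 < x * (1 - x) := mul_pos hx.1 (by linarith [hx.2])
  rw [arcsineWeight, show 1 - (2 * x - 1) ^ 2 = 2 ^ 2 * (x * (1 - x)) by ring,
    Real.sqrt_mul (by positivity), Real.sqrt_sq zero_le_two]
  field_simp [(Real.sqrt_pos.2 hq).ne']

theorem integrableOn_arcsineWeight : IntegrableOn arcsineWeight (Ioo 0 1) :=
  (intervalIntegral.integrableOn_deriv_of_nonneg (by fun_prop)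
    (fun _ hx => hasDerivAt_arcsin_two_mul_sub_one hx)
    (fun _ _ => by unfold arcsineWeight; positivity)).mono_set Ioo_subset_Ioc_self

theorem one_sub_mul_pos {c x : ℝ} (hc : c < 1) (hx : x ∈ Icc (0 : ℝ) 1) : 0 < 1 - c * x := by
  rcases le_total c 0 with h | h <;> nlinarith [hx.1, hx.2]

theorem hasDerivAt_one_sub_mul_rpow {a x : ℝ} (p : ℝ) (h : 0 < 1 - a * x) :
    HasDerivAt (fun y => (1 - a * y) ^ p) (-(p * a) * (1 - a * x) ^ (p - 1)) x := by
  have hlin : HasDerivAt (fun y : ℝ => 1 - a * y) (-a) x := by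
    simpa using ((hasDerivAt_id x).const_mul a).const_sub 1
  exact (hlin.rpow_const (Or.inl h.ne')).congr_deriv (by ring)

theorem continuousOn_one_sub_mul_rpow {c : ℝ} (hc : c < 1) (q : ℝ) :
    ContinuousOn (fun x => (1 - c * x) ^ q) (Icc 0 1) :=
  (continuousOn_const.sub (continuousOn_const.mul continuousOn_id)).rpow_const
    fun _ hx => Or.inl (one_sub_mul_pos hc hx).ne'

section Weighted

variable {K : ℝ → ℝ}

theorem MeasureTheory.IntegrableOn.one_sub_mul_rpow_mul (hK : IntegrableOn K (Ioo 0 1))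
    {c : ℝ} (hc : c < 1) (q : ℝ) : IntegrableOn (fun x => (1 - c * x) ^ q * K x) (Ioo 0 1) :=
  hK.continuousOn_mul_of_subset (continuousOn_one_sub_mul_rpow hc q) isCompact_Icc
    measurableSet_Ioo Ioo_subset_Icc_self

theorem MeasureTheory.IntegrableOn.id_mul (hK : IntegrableOn K (Ioo 0 1)) :
    IntegrableOn (fun x => x * K x) (Ioo 0 1) :=
  hK.continuousOn_mul_of_subset continuousOn_id isCompact_Icc measurableSet_Ioo
    Ioo_subset_Icc_self

theorem hasDerivAt_integral_one_sub_mul_rpow_mul (hK : IntegrableOn K (Ioo 0 1)) {p c : ℝ}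
    (hp : p ≤ 1) (hc : c < 0) :
    HasDerivAt (fun u => ∫ x in Ioo 0 1, (1 - u * x) ^ p * K x)
      (-p * ∫ x in Ioo 0 1, (1 - c * x) ^ (p - 1) * (x * K x)) c := by
  have hbase : ∀ u < (0 : ℝ), ∀ x ∈ Ioo (0 : ℝ) 1, 1 ≤ 1 - u * x := fun u hu x hx => by
    nlinarith [hx.1]
  rw [← integral_const_mul]
  refine (hasDerivAt_integral_of_dominated_loc_of_deriv_le (μ := volume.restrict (Ioo 0 1))
    (F := fun u x => (1 - u * x) ^ p * K x)
    (F' := fun u x => -p * ((1 - u * x) ^ (p - 1) * (x * K x))) (bound := fun x => |p| * |K x|)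
    (Iio_mem_nhds hc) ?_ (hK.one_sub_mul_rpow_mul (hc.trans one_pos) p) ?_ ?_
    (hK.norm.const_mul _) ?_).2
  · exact Filter.Eventually.of_forall fun u =>
      (by fun_prop : Measurable fun x : ℝ => (1 - u * x) ^ p).aestronglyMeasurable.mul
        hK.aestronglyMeasurable
  · exact ((by fun_prop : Measurable fun x : ℝ => -p * ((1 - c * x) ^ (p - 1) * x))
      |>.aestronglyMeasurable.mul hK.aestronglyMeasurable).congr
        (Filter.Eventually.of_forall fun x => by simp only [Pi.mul_apply]; ring)
  · filter_upwards [ae_restrict_mem measurableSet_Ioo] with x hx u hu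
    have h1 : (1 - u * x) ^ (p - 1) ≤ 1 :=
      Real.rpow_le_one_of_one_le_of_nonpos (hbase u hu x hx) (by linarith)
    have h0 : 0 ≤ (1 - u * x) ^ (p - 1) := Real.rpow_nonneg (by linarith [hbase u hu x hx]) _
    rw [norm_mul, Real.norm_eq_abs, Real.norm_eq_abs, abs_neg]
    refine mul_le_mul_of_nonneg_left ?_ (abs_nonneg p)
    calc |(1 - u * x) ^ (p - 1) * (x * K x)| = (1 - u * x) ^ (p - 1) * x * |K x| := by
          rw [abs_mul, abs_mul, abs_of_nonneg h0, abs_of_pos hx.1, mul_assoc]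
      _ ≤ 1 * 1 * |K x| :=
          mul_le_mul_of_nonneg_right (mul_le_mul h1 hx.2.le hx.1.le zero_le_one) (abs_nonneg _)
      _ = |K x| := by ring
  · filter_upwards [ae_restrict_mem measurableSet_Ioo] with x hx u hu
    have h := (hasDerivAt_one_sub_mul_rpow (a := x) (x := u) p (by nlinarith [hbase u hu x hx]))
      |>.mul_const (K x)
    simp only [mul_comm x] at h ⊢
    exact h.congr_deriv (by ring)

end Weighted

noncomputable def legendreForm (c x : ℝ) : ℝ := (1 - c * x) ^ (-1 / 2 : ℝ) * arcsineWeight x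

noncomputable def legendrePrimitive (b x : ℝ) : ℝ := ∫ y in (0 : ℝ)..x, legendreForm b y

theorem inv_sqrt_eq_legendreForm {c x : ℝ} (hc : c < 1) (hx : x ∈ Icc (0 : ℝ) 1) :
    (√(x * (1 - x) * (1 - c * x)))⁻¹ = legendreForm c x := by
  have hq : 0 ≤ x * (1 - x) := mul_nonneg hx.1 (by linarith [hx.2])
  rw [legendreForm, arcsineWeight, Real.sqrt_mul hq, mul_inv, mul_comm,
    Real.sqrt_eq_rpow (1 - c * x), ← Real.rpow_neg (one_sub_mul_pos hc hx).le]
  norm_num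

theorem integrableOn_legendreForm {c : ℝ} (hc : c < 1) :
    IntegrableOn (legendreForm c) (Ioo 0 1) :=
  integrableOn_arcsineWeight.one_sub_mul_rpow_mul hc _

theorem continuousOn_legendrePrimitive {b : ℝ} (hb : b < 1) :
    ContinuousOn (legendrePrimitive b) (Icc 0 1) := by
  have h := intervalIntegral.continuousOn_primitive_interval (μ := volume) (a := 0) (b := 1)
    (f := legendreForm b) (by
      rw [uIcc_of_le zero_le_one, integrableOn_Icc_iff_integrableOn_Ioo]
      exact integrableOn_legendreForm hb)
  rwa [uIcc_of_le zero_le_one] at h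

theorem hasDerivAt_legendrePrimitive {b x : ℝ} (hb : b < 1) (hx : x ∈ Ioo (0 : ℝ) 1) :
    HasDerivAt (legendrePrimitive b) (legendreForm b x) x := by
  have hq : 0 < x * (1 - x) := mul_pos hx.1 (by linarith [hx.2])
  have hcont : ContinuousAt (legendreForm b) x :=
    (((continuous_const.sub (continuous_const.mul continuous_id)).continuousAt).rpow_const
      (Or.inl (one_sub_mul_pos hb (Ioo_subset_Icc_self hx)).ne')).mul
      ((by fun_prop : Continuous fun y : ℝ => √(y * (1 - y))).continuousAt.inv₀
        (Real.sqrt_pos.2 hq).ne')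
  have hmeas : Measurable (legendreForm b) := by unfold legendreForm arcsineWeight; fun_prop
  refine intervalIntegral.integral_hasDerivAt_right ?_
    hmeas.stronglyMeasurable.stronglyMeasurableAtFilter hcont
  exact (intervalIntegrable_iff_integrableOn_Ioo_of_le hx.1.le).2
    ((integrableOn_legendreForm hb).mono_set (Ioo_subset_Ioo le_rfl hx.2.le))

theorem integrableOn_arcsineWeight_mul_legendrePrimitive {b : ℝ} (hb : b < 1) :
    IntegrableOn (fun x => arcsineWeight x * legendrePrimitive b x) (Ioo 0 1) :=
  integrableOn_arcsineWeight.mul_continuousOn_of_subset (continuousOn_legendrePrimitive hb)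
    measurableSet_Ioo isCompact_Icc Ioo_subset_Icc_self

theorem Lfun_eq_integral {b c : ℝ} (hb : b < 1) (hc : c < 1) :
    Lfun c b = 2 * ∫ x in Ioo 0 1,
      (1 - c * x) ^ (-1 / 2 : ℝ) * (arcsineWeight x * legendrePrimitive b x) := by
  have hint {c : ℝ} (hc : c < 1) :
      IntegrableOn (fun x => (√(x * (1 - x) * (1 - c * x)))⁻¹) (Ioo 0 1) :=
    (integrableOn_legendreForm hc).congr_fun
      (fun x hx => (inv_sqrt_eq_legendreForm hc (Ioo_subset_Icc_self hx)).symm) measurableSet_Ioo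
  unfold Lfun
  simp_rw [mul_inv]
  rw [setIntegral_triangle_mul (hint hc) (hint hb)]
  congr 1
  refine setIntegral_congr_fun measurableSet_Ioo fun x hx => ?_
  have hsub : uIcc 0 x ⊆ Icc 0 1 := by
    rw [uIcc_of_le hx.1.le]; exact Icc_subset_Icc le_rfl hx.2.le
  rw [inv_sqrt_eq_legendreForm hc (Ioo_subset_Icc_self hx), legendrePrimitive,
    intervalIntegral.integral_congr (g := legendreForm b)
      fun y hy => inv_sqrt_eq_legendreForm hb (hsub hy), legendreForm, mul_assoc]

theorem hasDerivAt_Lfun {b c : ℝ} (hb : b < 1) (hc : c < 0) :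
    HasDerivAt (fun u => Lfun u b) (∫ x in Ioo 0 1,
      (1 - c * x) ^ (-3 / 2 : ℝ) * (x * (arcsineWeight x * legendrePrimitive b x))) c := by
  have h := (hasDerivAt_integral_one_sub_mul_rpow_mul
    (integrableOn_arcsineWeight_mul_legendrePrimitive hb) (p := -1 / 2) (by norm_num) hc).const_mul
    (2 : ℝ)
  rw [show (-1 / 2 : ℝ) - 1 = -3 / 2 by norm_num] at h
  refine (h.congr_deriv (by ring)).congr_of_eventuallyEq ?_
  filter_upwards [Iio_mem_nhds hc] with u hu using Lfun_eq_integral hb (hu.trans one_pos)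

theorem deriv_deriv_Lfun {a b : ℝ} (ha : a < 0) (hb : b < 1) :
    deriv (deriv fun u => Lfun u b) a = 3 / 2 * ∫ x in Ioo 0 1,
      (1 - a * x) ^ (-5 / 2 : ℝ) * (x * (x * (arcsineWeight x * legendrePrimitive b x))) := by
  have h := hasDerivAt_integral_one_sub_mul_rpow_mul
    (integrableOn_arcsineWeight_mul_legendrePrimitive hb).id_mul (p := -3 / 2) (by norm_num) ha
  rw [show (-3 / 2 : ℝ) - 1 = -5 / 2 by norm_num] at h
  rw [Filter.EventuallyEq.deriv_eq (f := fun u => ∫ x in Ioo 0 1,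
      (1 - u * x) ^ (-3 / 2 : ℝ) * (x * (arcsineWeight x * legendrePrimitive b x))), h.deriv]
  · ring
  filter_upwards [Iio_mem_nhds ha] with u hu using (hasDerivAt_Lfun hb hu).deriv

-- `𝒟₁` applied to `legendreForm · x`, by `∂ₐ (1 - a x) ^ p = -p x (1 - a x) ^ (p - 1)`.
noncomputable def picardFuchsForm (a x : ℝ) : ℝ :=
  (a * (1 - a) * (3 / 4 * x ^ 2 * (1 - a * x) ^ (-5 / 2 : ℝ))
    + (1 - 2 * a) * (1 / 2 * x * (1 - a * x) ^ (-3 / 2 : ℝ))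
    - 1 / 4 * (1 - a * x) ^ (-1 / 2 : ℝ)) * arcsineWeight x

theorem two_mul_integral_legendrePrimitive_mul_picardFuchsForm {a b : ℝ} (ha : a < 1)
    (hb : b < 1) :
    2 * ∫ x in Ioo 0 1, legendrePrimitive b x * picardFuchsForm a x
      = a * (1 - a) * (3 / 2 * ∫ x in Ioo 0 1,
          (1 - a * x) ^ (-5 / 2 : ℝ) * (x * (x * (arcsineWeight x * legendrePrimitive b x))))
        + (1 - 2 * a) * (∫ x in Ioo 0 1,
          (1 - a * x) ^ (-3 / 2 : ℝ) * (x * (arcsineWeight x * legendrePrimitive b x)))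
        - 1 / 4 * (2 * ∫ x in Ioo 0 1,
          (1 - a * x) ^ (-1 / 2 : ℝ) * (arcsineWeight x * legendrePrimitive b x)) := by
  have hK := integrableOn_arcsineWeight_mul_legendrePrimitive hb
  set K := fun x => arcsineWeight x * legendrePrimitive b x
  set I₂ := fun x => (1 - a * x) ^ (-5 / 2 : ℝ) * (x * (x * K x))
  set I₁ := fun x => (1 - a * x) ^ (-3 / 2 : ℝ) * (x * K x)
  set I₀ := fun x => (1 - a * x) ^ (-1 / 2 : ℝ) * K x
  have h₂ : IntegrableOn I₂ (Ioo 0 1) := hK.id_mul.id_mul.one_sub_mul_rpow_mul ha _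
  have h₁ : IntegrableOn I₁ (Ioo 0 1) := hK.id_mul.one_sub_mul_rpow_mul ha _
  have h₀ : IntegrableOn I₀ (Ioo 0 1) := hK.one_sub_mul_rpow_mul ha _
  have h₂₁ : IntegrableOn (fun x => 3 / 4 * a * (1 - a) * I₂ x + (1 - 2 * a) / 2 * I₁ x)
      (Ioo 0 1) := (h₂.const_mul _).add (h₁.const_mul _)
  have hpointwise : (fun x => legendrePrimitive b x * picardFuchsForm a x)
      = fun x => 3 / 4 * a * (1 - a) * I₂ x + (1 - 2 * a) / 2 * I₁ x - 1 / 4 * I₀ x := by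
    ext x; simp only [I₂, I₁, I₀, picardFuchsForm]; ring
  rw [hpointwise, integral_sub h₂₁ (h₀.const_mul _),
    integral_add (h₂.const_mul _) (h₁.const_mul _), integral_const_mul, integral_const_mul,
    integral_const_mul]
  ring

noncomputable def picardFuchsPrimitive (a x : ℝ) : ℝ :=
  -(1 / 2) * √(x * (1 - x)) * (1 - a * x) ^ (-3 / 2 : ℝ)

theorem hasDerivAt_picardFuchsPrimitive {a x : ℝ} (hx : x ∈ Ioo (0 : ℝ) 1)
    (ha : 0 < 1 - a * x) :
    HasDerivAt (picardFuchsPrimitive a) (picardFuchsForm a x) x := by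
  have hq : 0 < x * (1 - x) := mul_pos hx.1 (by linarith [hx.2])
  have hquad : HasDerivAt (fun y : ℝ => y * (1 - y)) (1 - 2 * x) x :=
    ((hasDerivAt_id' x).mul ((hasDerivAt_id' x).const_sub 1)).congr_deriv (by ring)
  refine (((hquad.sqrt hq.ne').const_mul (-(1 / 2))).mul
    (hasDerivAt_one_sub_mul_rpow (-3 / 2) ha)).congr_deriv ?_
  have hs : √(x * (1 - x)) ^ 2 = x * (1 - x) := Real.sq_sqrt hq.le
  have hs0 : √(x * (1 - x)) ≠ 0 := (Real.sqrt_pos.2 hq).ne'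
  rw [picardFuchsForm, arcsineWeight, show (-3 / 2 : ℝ) - 1 = -5 / 2 by norm_num,
    show (-3 / 2 : ℝ) = -5 / 2 + 1 by norm_num, show (-1 / 2 : ℝ) = -5 / 2 + 1 + 1 by norm_num,
    Real.rpow_add_one ha.ne', Real.rpow_add_one ha.ne', Real.rpow_add_one ha.ne']
  -- both sides are `(1 - a x) ^ (-5/2) / √(x (1 - x))` times `a x² / 4 + (1 - a) x / 2 - 1 / 4`
  set r := (1 - a * x) ^ (-5 / 2 : ℝ)
  field_simp
  linear_combination -(12 * a * r) * hs

theorem integral_legendrePrimitive_mul_picardFuchsForm {a b : ℝ} (ha : a < 1) (hb : b < 1) :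
    ∫ x in Ioo 0 1, legendrePrimitive b x * picardFuchsForm a x
      = 1 / 2 * ∫ x in Ioo 0 1, (1 - a * x) ^ (-3 / 2 : ℝ) * (1 - b * x) ^ (-1 / 2 : ℝ) := by
  have hIcc : uIcc (0 : ℝ) 1 = Icc 0 1 := uIcc_of_le zero_le_one
  have hIoo : Ioo (min (0 : ℝ) 1) (max 0 1) = Ioo 0 1 := by simp
  have hpf_cont : ContinuousOn (picardFuchsPrimitive a) (Icc 0 1) :=
    (by fun_prop : Continuous fun x : ℝ => -(1 / 2) * √(x * (1 - x))).continuousOn.mul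
      (continuousOn_one_sub_mul_rpow ha _)
  have hform_int : IntegrableOn (picardFuchsForm a) (Ioo 0 1) := by
    have := continuousOn_one_sub_mul_rpow ha (-5 / 2)
    have := continuousOn_one_sub_mul_rpow ha (-3 / 2)
    have := continuousOn_one_sub_mul_rpow ha (-1 / 2)
    exact integrableOn_arcsineWeight.continuousOn_mul_of_subset (by fun_prop) isCompact_Icc
      measurableSet_Ioo Ioo_subset_Icc_self
  have hibp := intervalIntegral.integral_mul_deriv_eq_deriv_mul_of_hasDerivAt
    (hIcc ▸ continuousOn_legendrePrimitive hb) (hIcc ▸ hpf_cont)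
    (fun x hx => hasDerivAt_legendrePrimitive hb (hIoo ▸ hx))
    (fun x hx => hasDerivAt_picardFuchsPrimitive (hIoo ▸ hx)
      (one_sub_mul_pos ha (Ioo_subset_Icc_self (hIoo ▸ hx))))
    ((intervalIntegrable_iff_integrableOn_Ioo_of_le zero_le_one).2 (integrableOn_legendreForm hb))
    ((intervalIntegrable_iff_integrableOn_Ioo_of_le zero_le_one).2 hform_int)
  have hpf_one : picardFuchsPrimitive a 1 = 0 := by simp [picardFuchsPrimitive]
  have hprim_zero : legendrePrimitive b 0 = 0 := intervalIntegral.integral_same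
  rw [hpf_one, hprim_zero, mul_zero, zero_mul, sub_zero, zero_sub,
    intervalIntegral.integral_of_le zero_le_one, intervalIntegral.integral_of_le zero_le_one,
    integral_Ioc_eq_integral_Ioo, integral_Ioc_eq_integral_Ioo] at hibp
  rw [hibp, ← integral_neg, ← integral_const_mul]
  refine setIntegral_congr_fun measurableSet_Ioo fun x hx => ?_
  have hs0 : √(x * (1 - x)) ≠ 0 := (Real.sqrt_pos.2 (mul_pos hx.1 (by linarith [hx.2]))).ne'
  simp only [legendreForm, picardFuchsPrimitive, arcsineWeight]
  field_simp

theorem integral_one_sub_mul_rpow_mul_one_sub_mul_rpow {a b : ℝ} (ha : a < 1) (hb : b < 1)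
    (hab : a ≠ b) :
    ∫ x in Ioo 0 1, (1 - a * x) ^ (-3 / 2 : ℝ) * (1 - b * x) ^ (-1 / 2 : ℝ)
      = 2 / (a - b) * (√(1 - b) / √(1 - a) - 1) := by
  have hderiv : ∀ x ∈ uIcc (0 : ℝ) 1, HasDerivAt
      (fun y => 2 / (a - b) * ((1 - b * y) ^ (1 / 2 : ℝ) * (1 - a * y) ^ (-1 / 2 : ℝ)))
      ((1 - a * x) ^ (-3 / 2 : ℝ) * (1 - b * x) ^ (-1 / 2 : ℝ)) x := by
    intro x hx
    rw [uIcc_of_le zero_le_one] at hx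
    have hax := one_sub_mul_pos ha hx
    have hbx := one_sub_mul_pos hb hx
    refine (((hasDerivAt_one_sub_mul_rpow (1 / 2) hbx).mul
      (hasDerivAt_one_sub_mul_rpow (-1 / 2) hax)).const_mul _).congr_deriv ?_
    have hA : (1 - a * x) ^ (-1 / 2 : ℝ) = (1 - a * x) ^ (-3 / 2 : ℝ) * (1 - a * x) := by
      rw [← Real.rpow_add_one hax.ne']; norm_num
    have hB : (1 - b * x) ^ (1 / 2 : ℝ) = (1 - b * x) ^ (-1 / 2 : ℝ) * (1 - b * x) := by
      rw [← Real.rpow_add_one hbx.ne']; norm_num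
    rw [show (1 / 2 : ℝ) - 1 = -1 / 2 by norm_num, show (-1 / 2 : ℝ) - 1 = -3 / 2 by norm_num,
      hA, hB]
    field_simp
    ring
  have hcont : ContinuousOn (fun x => (1 - a * x) ^ (-3 / 2 : ℝ) * (1 - b * x) ^ (-1 / 2 : ℝ))
      (uIcc 0 1) := by
    rw [uIcc_of_le zero_le_one]
    exact (continuousOn_one_sub_mul_rpow ha _).mul (continuousOn_one_sub_mul_rpow hb _)
  rw [← integral_Ioc_eq_integral_Ioo, ← intervalIntegral.integral_of_le zero_le_one,
    intervalIntegral.integral_eq_sub_of_hasDerivAt hderiv hcont.intervalIntegrable,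
    Real.sqrt_eq_rpow, Real.sqrt_eq_rpow, div_eq_mul_inv _ ((1 - a) ^ _),
    ← Real.rpow_neg (by linarith)]
  norm_num
  ring

/-- The first inhomogeneous Picard–Fuchs equation:
`𝒟₁(ℒ) = (2/(a-b))·(√(1-b)/√(1-a) - 1)` where
`𝒟₁ = a(1-a)∂²/∂a² + (1-2a)∂/∂a - 1/4`, for parameters `a, b < 0` with `a ≠ b`
(a simply connected region where the fixed positive branches of the square roots exist). -/
theorem stmt2 (a b : ℝ) (ha : a < 0) (hb : b < 0) (hab : a ≠ b) :
    a * (1 - a) * deriv (fun s => deriv (fun u => Lfun u b) s) a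
      + (1 - 2 * a) * deriv (fun u => Lfun u b) a
      - (1/4) * Lfun a b
    = (2 / (a - b)) * (Real.sqrt (1 - b) / Real.sqrt (1 - a) - 1) := by
  have ha1 : a < 1 := ha.trans one_pos
  have hb1 : b < 1 := hb.trans one_pos
  rw [deriv_deriv_Lfun ha hb1, (hasDerivAt_Lfun hb1 ha).deriv, Lfun_eq_integral hb1 ha1,
    ← two_mul_integral_legendrePrimitive_mul_picardFuchsForm ha1 hb1,
    integral_legendrePrimitive_mul_picardFuchsForm ha1 hb1,
    integral_one_sub_mul_rpow_mul_one_sub_mul_rpow ha1 hb1 hab]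
  ring
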